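/- arXiv:2011.11878 — 4 statements merged into one kernel-verified Lean document; each statement's English description precedes it below -/
import Mathlib

section
/- Let μ be a σ-finite measure on a measurable space Ω, and let f, g : Ω → ℝ be measurable probability densities with respect to μ (∫ f dμ = ∫ g dμ = 1) with f(x) > 0 and g(x) > 0 for μ-almost every x. Then for every measurable function D : Ω → ℝ with 0 < D(x) < 1 for μ-almost every x such that the integrals below exist and are finite, ∫ (f(x)·log(D(x)) + g(x)·log(1 − D(x))) dμ(x) ≤ ∫ (f(x)·log(f(x)/(f(x)+g(x))) + g(x)·log(g(x)/(f(x)+g(x)))) dμ(x). -/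
/-!
The objective is maximized pointwise. For `a, b > 0` and `t ∈ (0,1)`, the bound
`log x ≤ x - 1` applied to `x = t (a + b) / a` and `x = (1 - t)(a + b) / b`, weighted by `a`
and `b`, has right-hand sides summing to zero; this is exactly
`a log t + b log (1 - t) ≤ a log (a / (a + b)) + b log (b / (a + b))`.
Integrating this a.e. inequality gives the theorem.
-/

open MeasureTheory Real

theorem mul_log_div_le_sub {a s : ℝ} (ha : 0 < a) (hs : 0 < s) : a * log (s / a) ≤ s - a :=
  calc a * log (s / a) ≤ a * (s / a - 1) :=
        mul_le_mul_of_nonneg_left (log_le_sub_one_of_pos (div_pos hs ha)) ha.le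
    _ = s - a := by field_simp

theorem mul_log_add_mul_log_one_sub_le {a b t : ℝ} (ha : 0 < a) (hb : 0 < b) (ht₀ : 0 < t)
    (ht₁ : t < 1) :
    a * log t + b * log (1 - t) ≤ a * log (a / (a + b)) + b * log (b / (a + b)) := by
  have hab : 0 < a + b := by linarith
  have hfst := mul_log_div_le_sub ha (mul_pos ht₀ hab)
  have hsnd := mul_log_div_le_sub hb (mul_pos (sub_pos.2 ht₁) hab)
  rw [log_div (by positivity) ha.ne', log_mul ht₀.ne' hab.ne'] at hfst
  rw [log_div (by positivity) hb.ne', log_mul (sub_pos.2 ht₁).ne' hab.ne'] at hsnd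
  rw [log_div ha.ne' hab.ne', log_div hb.ne' hab.ne']
  linear_combination hfst + hsnd

theorem optimal_discriminator_integral_general {Ω : Type*} [MeasurableSpace Ω]
    (μ : Measure Ω)
    (f g : Ω → ℝ)
    (hfpos : ∀ᵐ x ∂μ, 0 < f x) (hgpos : ∀ᵐ x ∂μ, 0 < g x) :
    ∀ D : Ω → ℝ, Measurable D → (∀ᵐ x ∂μ, 0 < D x ∧ D x < 1) →
      Integrable (fun x => f x * Real.log (D x) + g x * Real.log (1 - D x)) μ →
      Integrable (fun x => f x * Real.log (f x / (f x + g x)) +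
        g x * Real.log (g x / (f x + g x))) μ →
      ∫ x, (f x * Real.log (D x) + g x * Real.log (1 - D x)) ∂μ ≤
        ∫ x, (f x * Real.log (f x / (f x + g x)) +
          g x * Real.log (g x / (f x + g x))) ∂μ := by
  intro D _ hD hintD hintOpt
  refine integral_mono_ae hintD hintOpt ?_
  filter_upwards [hfpos, hgpos, hD] with x hfx hgx ⟨hDx₀, hDx₁⟩
  exact mul_log_add_mul_log_one_sub_le hfx hgx hDx₀ hDx₁

/-- The integral form of the optimal-discriminator fact: among measurable discriminators
`D` with values a.e. in `(0,1)` (such that the integrals below exist and are finite), the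
objective `∫ (f · log D + g · log (1 − D)) dμ` is maximized by `D* = f / (f + g)`. -/
theorem optimal_discriminator_integral {Ω : Type*} [MeasurableSpace Ω]
    (μ : Measure Ω) [SigmaFinite μ]
    (f g : Ω → ℝ) (hf : Measurable f) (hg : Measurable g)
    (hfpos : ∀ᵐ x ∂μ, 0 < f x) (hgpos : ∀ᵐ x ∂μ, 0 < g x)
    (hf1 : ∫ x, f x ∂μ = 1) (hg1 : ∫ x, g x ∂μ = 1) :
    ∀ D : Ω → ℝ, Measurable D → (∀ᵐ x ∂μ, 0 < D x ∧ D x < 1) →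
      Integrable (fun x => f x * Real.log (D x) + g x * Real.log (1 - D x)) μ →
      Integrable (fun x => f x * Real.log (f x / (f x + g x)) +
        g x * Real.log (g x / (f x + g x))) μ →
      ∫ x, (f x * Real.log (D x) + g x * Real.log (1 - D x)) ∂μ ≤
        ∫ x, (f x * Real.log (f x / (f x + g x)) +
          g x * Real.log (g x / (f x + g x))) ∂μ :=
  optimal_discriminator_integral_general μ f g hfpos hgpos
end

section
/- Let n be a finite index type, let C be a fixed real n×n matrix, and let S be a real n×n matrix whose determinant is a unit (S is invertible). Then, as β → ∞ along the real numbers, the matrices Σ*(β) = ((1/(1+β)) • (C + β • S⁻¹))⁻¹ converge to S; that is, the function β ↦ ((1/(1+β)) • (C + β • S⁻¹))⁻¹ tends to S in the topology of real n×n matrices as β tends to infinity. -/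
/-! `(1 + β)⁻¹ • (C + β • S⁻¹) = S⁻¹ + (1 + β)⁻¹ • (C - S⁻¹)` tends to `S⁻¹`, and matrix
inversion is continuous at the invertible matrix `S⁻¹`, whose inverse is `S`. -/

open Filter Matrix Topology

theorem tendsto_one_div_one_add_atTop_zero :
    Tendsto (fun β : ℝ => 1 / (1 + β)) atTop (𝓝 0) :=
  tendsto_const_nhds.div_atTop (tendsto_atTop_add_const_left atTop 1 tendsto_id)

theorem one_div_one_add_smul_add_smul {E : Type*} [AddCommGroup E] [Module ℝ E]
    (x y : E) {β : ℝ} (hβ : 1 + β ≠ 0) :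
    (1 / (1 + β)) • (x + β • y) = (1 / (1 + β)) • (x - y) + y := by
  calc (1 / (1 + β)) • (x + β • y)
      = (1 / (1 + β)) • (x - y) + (1 / (1 + β)) • ((1 + β) • y) := by
        rw [← smul_add, add_smul, one_smul, ← add_assoc, sub_add_cancel]
    _ = (1 / (1 + β)) • (x - y) + y := by
        rw [smul_smul, one_div_mul_cancel hβ, one_smul]

theorem tendsto_one_div_one_add_smul_add_smul {E : Type*} [AddCommGroup E] [Module ℝ E]
    [TopologicalSpace E] [IsTopologicalAddGroup E] [ContinuousSMul ℝ E] (x y : E) :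
    Tendsto (fun β : ℝ => (1 / (1 + β)) • (x + β • y)) atTop (𝓝 y) := by
  have hlim : Tendsto (fun β : ℝ => (1 / (1 + β)) • (x - y) + y) atTop (𝓝 y) := by
    simpa only [zero_smul, zero_add] using
      (tendsto_one_div_one_add_atTop_zero.smul_const (x - y)).add_const y
  refine hlim.congr' ?_
  filter_upwards [eventually_gt_atTop 0] with β hβ
  exact (one_div_one_add_smul_add_smul x y (by linarith)).symm

theorem Matrix.continuousAt_inv_of_isUnit_det {n K : Type*} [Fintype n] [DecidableEq n]
    [Field K] [TopologicalSpace K] [IsTopologicalRing K] [ContinuousInv₀ K]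
    (A : Matrix n n K) (hA : IsUnit A.det) : ContinuousAt Inv.inv A := by
  refine continuousAt_matrix_inv A ?_
  simpa only [Ring.inverse_eq_inv'] using continuousAt_inv₀ hA.ne_zero

/-- Corollary 1 of the paper: for a fixed matrix `C` and an invertible matrix `S`,
the stationary covariance `Σ*(β) = ((1/(1+β)) • (C + β • S⁻¹))⁻¹` converges to `S`
as the total-correlation weight `β → ∞`. -/
theorem stationary_covariance_limit {n : Type*} [Fintype n] [DecidableEq n]
    (C S : Matrix n n ℝ) (hS : IsUnit S.det) :
    Tendsto (fun β : ℝ => ((1 / (1 + β)) • (C + β • S⁻¹))⁻¹) atTop (nhds S) := by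
  have hinv : ContinuousAt Inv.inv S⁻¹ :=
    S⁻¹.continuousAt_inv_of_isUnit_det (S.isUnit_nonsing_inv_det hS)
  simpa only [Function.comp_def, nonsing_inv_nonsing_inv S hS] using
    hinv.tendsto.comp (tendsto_one_div_one_add_smul_add_smul C S⁻¹)
end

section
/- Let n and m be finite index types, let C be a fixed real (n+m)×(n+m) matrix, let B be an invertible real n×n matrix and let E be an invertible real m×m matrix, and let S = fromBlocks B 0 0 E be the block-diagonal matrix with diagonal blocks B and E and zero off-diagonal blocks. Then, as β → ∞ along the real numbers, the matrices Σ*(β) = ((1/(1+β)) • (C + β • S⁻¹))⁻¹ converge to fromBlocks B 0 0 E; in particular the limit matrix has zero off-diagonal blocks. -/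
/-!
As `β → ∞` the precision matrix `(1 + β)⁻¹ • (C + β • S⁻¹)` is a convex combination of `C` and
`S⁻¹` whose weight on `C` vanishes, so it tends to `S⁻¹`. Since `S` is invertible, matrix
inversion is continuous at `S⁻¹`, and the stationary covariance tends to `(S⁻¹)⁻¹ = S`. For the
block-diagonal `S = fromBlocks B 0 0 E` invertibility is `det S = det B * det E`.
-/

open Filter Matrix Topology

theorem tendsto_one_div_one_add_smul_add_smul_atTop {V : Type*} [AddCommGroup V] [Module ℝ V]
    [TopologicalSpace V] [ContinuousAdd V] [ContinuousSMul ℝ V] (c a : V) :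
    Tendsto (fun β : ℝ => (1 / (1 + β)) • (c + β • a)) atTop (𝓝 a) := by
  have h_weight : Tendsto (fun β : ℝ => 1 / (1 + β)) atTop (𝓝 0) :=
    tendsto_const_nhds.div_atTop (tendsto_atTop_add_const_left atTop 1 tendsto_id)
  have h_eq : (fun β : ℝ => a + (1 / (1 + β)) • (c - a)) =ᶠ[atTop]
      fun β => (1 / (1 + β)) • (c + β • a) := by
    filter_upwards [eventually_gt_atTop (0 : ℝ)] with β hβ
    have h_ne : 1 + β ≠ 0 := by positivity
    calc a + (1 / (1 + β)) • (c - a)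
        = (1 / (1 + β)) • ((1 + β) • a) + (1 / (1 + β)) • (c - a) := by
          rw [smul_smul, one_div_mul_cancel h_ne, one_smul]
      _ = (1 / (1 + β)) • (c + β • a) := by rw [← smul_add]; module
  simpa using (tendsto_const_nhds.add (h_weight.smul_const (c - a))).congr' h_eq

theorem Matrix.tendsto_inv_of_isUnit_det {ι R α : Type*} [Fintype ι] [DecidableEq ι]
    [NormedCommRing R] [CompleteSpace R] {l : Filter α} {f : α → Matrix ι ι R}
    {A : Matrix ι ι R} (hA : IsUnit A.det) (hf : Tendsto f l (𝓝 A)) :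
    Tendsto (fun x => (f x)⁻¹) l (𝓝 A⁻¹) :=
  (continuousAt_matrix_inv A (NormedRing.inverse_continuousAt hA.unit)).tendsto.comp hf

/-- Block-diagonal form of Corollary 1: if the permuted covariance `S = fromBlocks B 0 0 E`
is block diagonal with invertible diagonal blocks `B` and `E`, then the stationary
covariance `Σ*(β) = ((1/(1+β)) • (C + β • S⁻¹))⁻¹` converges, as `β → ∞`, to the
block-diagonal matrix `fromBlocks B 0 0 E`; in particular the limit has zero
off-diagonal blocks. -/
theorem stationary_covariance_block_diagonal_limit
    {n m : Type*} [Fintype n] [Fintype m] [DecidableEq n] [DecidableEq m]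
    (C : Matrix (n ⊕ m) (n ⊕ m) ℝ) (B : Matrix n n ℝ) (E : Matrix m m ℝ)
    (hB : IsUnit B.det) (hE : IsUnit E.det) :
    Tendsto (fun β : ℝ => ((1 / (1 + β)) • (C + β • (fromBlocks B 0 0 E)⁻¹))⁻¹)
      atTop (nhds (fromBlocks B 0 0 E)) := by
  have hS : IsUnit (fromBlocks B 0 0 E).det := by
    rw [det_fromBlocks_zero₂₁]
    exact hB.mul hE
  have hS_inv : IsUnit (fromBlocks B 0 0 E)⁻¹.det := by
    rwa [det_nonsing_inv, isUnit_ringInverse]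
  simpa only [nonsing_inv_nonsing_inv _ hS] using
    tendsto_inv_of_isUnit_det hS_inv (tendsto_one_div_one_add_smul_add_smul_atTop C _)
end

section
/- Let n be a finite index type and let A be a symmetric positive-definite real n×n matrix. Then for every symmetric positive-definite real n×n matrix Σ, trace(A·Σ) − log(det Σ) ≥ card(n) + log(det A), with equality if and only if Σ = A⁻¹. -/
/-!
Factor `A = Bᴴ B` with `B` invertible. Then `M = B S Bᴴ` is positive definite and
`trace (A S) - log det S - log det A = trace M - log det M = ∑ᵢ (λᵢ - log λᵢ)` over the
eigenvalues `λᵢ > 0` of `M`. Since `λ - log λ ≥ 1` with equality only at `λ = 1`, the sum is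
at least `card n`, with equality exactly when `M = 1`, i.e. `S = (Bᴴ B)⁻¹ = A⁻¹`.
-/

open Matrix

namespace Matrix

variable {n : Type*} [Fintype n] [DecidableEq n]

theorem IsHermitian.eq_one_of_eigenvalues_eq_one {𝕜 : Type*} [RCLike 𝕜] {M : Matrix n n 𝕜}
    (hM : M.IsHermitian) (h : ∀ i, hM.eigenvalues i = 1) : M = 1 := by
  rw [hM.spectral_theorem]
  simp [h, Function.comp_def]

section PosDef

variable {M : Matrix n n ℝ} (hM : M.PosDef)
include hM

theorem PosDef.trace_sub_log_det_sub_card :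
    M.trace - Real.log M.det - Fintype.card n =
      ∑ i, (hM.isHermitian.eigenvalues i - Real.log (hM.isHermitian.eigenvalues i) - 1) := by
  rw [hM.isHermitian.trace_eq_sum_eigenvalues, hM.isHermitian.det_eq_prod_eigenvalues]
  simp only [RCLike.ofReal_real_eq_id, id]
  rw [Real.log_prod fun i _ => (hM.eigenvalues_pos i).ne', Finset.sum_sub_distrib,
    Finset.sum_sub_distrib]
  simp

theorem PosDef.eigenvalue_sub_log_sub_one_nonneg (i : n) :
    0 ≤ hM.isHermitian.eigenvalues i - Real.log (hM.isHermitian.eigenvalues i) - 1 := by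
  linarith [Real.log_le_sub_one_of_pos (hM.eigenvalues_pos i)]

theorem PosDef.card_le_trace_sub_log_det :
    (Fintype.card n : ℝ) ≤ M.trace - Real.log M.det := by
  have := hM.trace_sub_log_det_sub_card
  linarith [Finset.sum_nonneg fun i (_ : i ∈ Finset.univ) =>
    hM.eigenvalue_sub_log_sub_one_nonneg i]

theorem PosDef.trace_sub_log_det_eq_card_iff :
    M.trace - Real.log M.det = Fintype.card n ↔ M = 1 := by
  refine ⟨fun h => ?_, by rintro rfl; simp⟩
  have hzero := (Finset.sum_eq_zero_iff_of_nonneg fun i _ =>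
    hM.eigenvalue_sub_log_sub_one_nonneg i).mp (hM.trace_sub_log_det_sub_card ▸ sub_eq_zero.mpr h)
  refine hM.isHermitian.eq_one_of_eigenvalues_eq_one fun i => ?_
  by_contra hne
  linarith [Real.log_lt_sub_one_of_pos (hM.eigenvalues_pos i) hne, hzero i (Finset.mem_univ i)]

end PosDef

variable {R : Type*} [CommRing R] [StarRing R]

theorem det_mul_mul_conjTranspose (B S : Matrix n n R) :
    (B * S * Bᴴ).det = (Bᴴ * B).det * S.det := by
  simp only [det_mul]
  ring

theorem mul_mul_conjTranspose_eq_one_iff {B : Matrix n n R} (hB : IsUnit B.det) (S : Matrix n n R) :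
    B * S * Bᴴ = 1 ↔ S = (Bᴴ * B)⁻¹ := by
  have hBH : IsUnit Bᴴ.det := by simpa using hB.star
  rw [mul_inv_rev]
  constructor
  · intro h
    calc S = B⁻¹ * (B * S * Bᴴ) * Bᴴ⁻¹ := by
          rw [mul_assoc B, nonsing_inv_mul_cancel_left _ _ hB, mul_nonsing_inv_cancel_right _ _ hBH]
      _ = B⁻¹ * Bᴴ⁻¹ := by rw [h, Matrix.mul_one]
  · rintro rfl
    rw [← mul_assoc, mul_nonsing_inv _ hB, Matrix.one_mul, nonsing_inv_mul _ hBH]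

end Matrix

/-- Trace–log-determinant minimization (the analytic fact behind Proposition 1): for a
symmetric positive-definite matrix `A`, every symmetric positive-definite matrix `Σ`
satisfies `trace (A Σ) − log det Σ ≥ card n + log det A`, with equality iff `Σ = A⁻¹`. -/
theorem trace_sub_logDet_ge {n : Type*} [Fintype n] [DecidableEq n]
    (A : Matrix n n ℝ) (hA : A.PosDef) :
    ∀ S : Matrix n n ℝ, S.PosDef →
      ((Fintype.card n : ℝ) + Real.log A.det ≤ (A * S).trace - Real.log S.det) ∧
        ((A * S).trace - Real.log S.det = (Fintype.card n : ℝ) + Real.log A.det ↔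
          S = A⁻¹) := by
  intro S hS
  obtain ⟨B, hAB⟩ : ∃ B : Matrix n n ℝ, A = Bᴴ * B := by
    open scoped MatrixOrder in
    exact CStarAlgebra.nonneg_iff_eq_star_mul_self.mp hA.posSemidef.nonneg
  have hB : IsUnit B.det := by
    have hAunit := hA.det_pos.ne'.isUnit
    rw [hAB, det_mul] at hAunit
    exact isUnit_of_mul_isUnit_right hAunit
  have hM : (B * S * Bᴴ).PosDef := hS.mul_mul_conjTranspose_same <|
    vecMul_injective_iff_isUnit.mpr ((isUnit_iff_isUnit_det B).mpr hB)
  have hshift : (A * S).trace - Real.log S.det =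
      (B * S * Bᴴ).trace - Real.log (B * S * Bᴴ).det + Real.log A.det := by
    rw [trace_mul_cycle, det_mul_mul_conjTranspose, ← hAB,
      Real.log_mul hA.det_pos.ne' hS.det_pos.ne']
    ring
  rw [hshift, add_le_add_iff_right, add_left_inj, hAB, ← mul_mul_conjTranspose_eq_one_iff hB]
  exact ⟨hM.card_le_trace_sub_log_det, hM.trace_sub_log_det_eq_card_iff⟩
end
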